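/- Let Λ ⊊ Γ be a minimal extension of orders of an étale K-algebra A. Then the conductor (Λ : Γ) is a prime (maximal) ideal 𝔓 of Λ, and Γ ⊆ (𝔓 : 𝔓). Moreover, if 𝔭 = 𝔓 ∩ R, then 𝔭 is the unique prime ideal of R dividing the index ideal [Γ : Λ]. -/

import Mathlib

/-!
For `b ∈ Λ` the ring `Λ + bΓ` lies between `Λ` and `Γ`. If `b ∉ (Λ : Γ)` it is not `Λ`, so by
minimality it is `Γ`, and then `ab ∈ (Λ : Γ)` gives `aΓ = aΛ + abΓ ⊆ Λ`: the conductor is prime.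
A common denominator `r ≠ 0` of `Γ` over `Λ` lies in it, so `𝔭 = (Λ : Γ) ∩ R` is a nonzero prime
of the Dedekind domain `R`, hence maximal, and `(Λ : Γ)` is maximal because `Λ` is integral over
`R`. Finally `𝔭` kills `Γ/Λ`, so for `x ∈ Γ \ Λ` the proper ideal `{a | a • x ∈ Λ}` equals `𝔭`;
if `𝔮ᵏ x ⊆ Λ` then `𝔮ᵏ ⊆ 𝔭`, whence `𝔮 = 𝔭`.
-/

open Submodule

section Denominators

variable {R : Type*} [CommRing R]

theorem exists_ne_zero_smul_mem_of_mem_span [IsDomain R] {K V : Type*} [Field K] [Algebra R K]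
    [IsFractionRing R K] [AddCommGroup V] [Module R V] [Module K V] [IsScalarTower R K V]
    (L : Submodule R V) {x : V} (hx : x ∈ span K (L : Set V)) :
    ∃ r : R, r ≠ 0 ∧ r • x ∈ L := by
  obtain ⟨y, hy, z, rfl⟩ := (IsLocalization.mem_span_iff (nonZeroDivisors R)).mp hx
  refine ⟨z, nonZeroDivisors.ne_zero z.2, ?_⟩
  rwa [← algebraMap_smul K, smul_smul, IsLocalization.mul_mk'_eq_mk'_of_mul, mul_one,
    IsLocalization.mk'_self, one_smul, ← span_eq L]

theorem exists_ne_zero_smul_mem_of_fg [NoZeroDivisors R] {M : Type*} [AddCommGroup M]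
    [Module R M] (L : Submodule R M) {N : Submodule R M} (hN : N.FG)
    (h : ∀ x ∈ N, ∃ r : R, r ≠ 0 ∧ r • x ∈ L) :
    ∃ r : R, r ≠ 0 ∧ ∀ x ∈ N, r • x ∈ L := by
  induction N, hN using fg_induction with
  | singleton x =>
    obtain ⟨r, hr, hrx⟩ := h x (mem_span_singleton_self x)
    refine ⟨r, hr, fun y hy => ?_⟩
    obtain ⟨c, rfl⟩ := mem_span_singleton.mp hy
    rw [smul_comm]
    exact L.smul_mem c hrx
  | sup N₁ N₂ _ _ ih₁ ih₂ =>
    obtain ⟨r₁, hr₁, h₁⟩ := ih₁ fun x hx => h x (mem_sup_left hx)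
    obtain ⟨r₂, hr₂, h₂⟩ := ih₂ fun x hx => h x (mem_sup_right hx)
    refine ⟨r₁ * r₂, mul_ne_zero hr₁ hr₂, fun y hy => ?_⟩
    obtain ⟨y₁, hy₁, y₂, hy₂, rfl⟩ := mem_sup.mp hy
    rw [smul_add, mul_comm, mul_smul, mul_comm, mul_smul r₁]
    exact L.add_mem (L.smul_mem r₂ (h₁ y₁ hy₁)) (L.smul_mem r₁ (h₂ y₂ hy₂))

end Denominators

namespace Subalgebra

variable {R A : Type*} [CommRing R] [CommRing A] [Algebra R A] (Λ Γ : Subalgebra R A)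

def conductor : Ideal Λ where
  carrier := {p | ∀ g ∈ Γ, (p : A) * g ∈ Λ}
  add_mem' hp hq g hg := by
    simpa only [AddMemClass.coe_add, add_mul] using add_mem (hp g hg) (hq g hg)
  zero_mem' g _ := by simpa only [ZeroMemClass.coe_zero, zero_mul] using zero_mem Λ
  smul_mem' c p hp g hg := by
    simpa only [smul_eq_mul, MulMemClass.coe_mul, mul_assoc] using mul_mem c.2 (hp g hg)

variable {Λ Γ}

theorem image_val_conductor :
    Subtype.val '' (Λ.conductor Γ : Set Λ) = {x : A | ∀ g ∈ Γ, x * g ∈ Λ} := by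
  ext x
  refine ⟨fun ⟨p, hp, hpx⟩ => hpx ▸ hp, fun hx => ⟨⟨x, ?_⟩, hx, rfl⟩⟩
  simpa only [mul_one] using hx 1 Γ.one_mem

theorem mul_mem_image_val_conductor {x : A} (hx : x ∈ Γ) {p : Λ} (hp : p ∈ Λ.conductor Γ) :
    x * p ∈ Subtype.val '' (Λ.conductor Γ : Set Λ) := by
  rw [image_val_conductor]
  intro g hg
  rw [mul_comm x, mul_assoc]
  exact hp _ (Γ.mul_mem hx hg)

theorem conductor_ne_top (h : ¬Γ ≤ Λ) : Λ.conductor Γ ≠ ⊤ := by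
  refine fun htop => h fun g hg => ?_
  have h1 : (1 : Λ) ∈ Λ.conductor Γ := htop ▸ Submodule.mem_top
  simpa only [OneMemClass.coe_one, one_mul] using h1 g hg

theorem smul_mem_of_mem_comap_conductor {a : R}
    (ha : a ∈ (Λ.conductor Γ).comap (algebraMap R Λ)) {x : A} (hx : x ∈ Γ) : a • x ∈ Λ := by
  simpa only [Algebra.smul_def, coe_algebraMap] using ha x hx

theorem algebraMap_mem_conductor {r : R} (hr : ∀ g ∈ Γ, r • g ∈ Λ) :
    algebraMap R Λ r ∈ Λ.conductor Γ := fun g hg => by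
  simpa only [coe_algebraMap, Algebra.smul_def] using hr g hg

def addMul (hΛΓ : Λ ≤ Γ) (b : Λ) : Subalgebra R A where
  carrier := {x | ∃ l ∈ Λ, ∃ g ∈ Γ, x = l + b * g}
  mul_mem' := by
    rintro _ _ ⟨l, hl, g, hg, rfl⟩ ⟨l', hl', g', hg', rfl⟩
    refine ⟨l * l', Λ.mul_mem hl hl', l * g' + g * l' + g * (b * g'), ?_, by ring⟩
    have hb : (b : A) ∈ Γ := hΛΓ b.2
    exact add_mem (add_mem (mul_mem (hΛΓ hl) hg') (mul_mem hg (hΛΓ hl')))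
      (mul_mem hg (mul_mem hb hg'))
  add_mem' := by
    rintro _ _ ⟨l, hl, g, hg, rfl⟩ ⟨l', hl', g', hg', rfl⟩
    exact ⟨l + l', add_mem hl hl', g + g', add_mem hg hg', by ring⟩
  algebraMap_mem' c := ⟨algebraMap R A c, Λ.algebraMap_mem c, 0, Γ.zero_mem, by ring⟩

theorem le_addMul (hΛΓ : Λ ≤ Γ) (b : Λ) : Λ ≤ addMul hΛΓ b :=
  fun x hx => ⟨x, hx, 0, Γ.zero_mem, by ring⟩

theorem addMul_le (hΛΓ : Λ ≤ Γ) (b : Λ) : addMul hΛΓ b ≤ Γ := by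
  rintro _ ⟨l, hl, g, hg, rfl⟩
  exact add_mem (hΛΓ hl) (mul_mem (hΛΓ b.2) hg)

theorem isPrime_conductor (hΛΓ : Λ ≤ Γ) (hΓΛ : ¬Γ ≤ Λ)
    (hmin : ∀ b : Λ, addMul hΛΓ b = Λ ∨ addMul hΛΓ b = Γ) : (Λ.conductor Γ).IsPrime := by
  refine ⟨conductor_ne_top hΓΛ, fun {a b} hab => or_iff_not_imp_right.mpr fun hb => ?_⟩
  have hM : addMul hΛΓ b = Γ := (hmin b).resolve_left fun hM => hb fun g hg => by
    have hbg : (b : A) * g ∈ addMul hΛΓ b := ⟨0, Λ.zero_mem, g, hg, by ring⟩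
    rwa [hM] at hbg
  intro g hg
  obtain ⟨l, hl, g', hg', rfl⟩ := hM ▸ hg
  rw [mul_add, ← mul_assoc]
  exact add_mem (mul_mem a.2 hl) (hab g' hg')

end Subalgebra

theorem Ideal.eq_of_smul_mem_of_pow_smul_mem {R M : Type*} [CommRing R] [AddCommGroup M]
    [Module R M] {N : Submodule R M} {x : M} (hx : x ∉ N) {𝔭 𝔮 : Ideal R} [𝔭.IsMaximal]
    (h𝔮 : 𝔮.IsMaximal) (h𝔭x : ∀ a ∈ 𝔭, a • x ∈ N) {k : ℕ} (h𝔮x : ∀ a ∈ 𝔮 ^ k, a • x ∈ N) :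
    𝔮 = 𝔭 := by
  have hcolon : N.colon {x} = 𝔭 := by
    refine (Ideal.IsMaximal.eq_of_le ‹_› ?_ fun a ha => mem_colon_singleton.mpr (h𝔭x a ha)).symm
    exact (Ideal.ne_top_iff_one _).mpr fun h => hx (by simpa using mem_colon_singleton.mp h)
  have hle : 𝔮 ^ k ≤ 𝔭 := hcolon ▸ fun a ha => mem_colon_singleton.mpr (h𝔮x a ha)
  exact h𝔮.eq_of_le Ideal.IsPrime.ne_top' (Ideal.IsPrime.le_of_pow_le hle)

theorem statement11 {R : Type*} {K A : Type u} [CommRing R] [IsDedekindDomain R] [Field K]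
    [Algebra R K] [IsFractionRing R K] [CommRing A] [Algebra K A] [Algebra R A]
    [IsScalarTower R K A]
    (Λ Γ : Subalgebra R A)
    (hΛfin : Module.Finite R Λ) (hΛspan : Submodule.span K (Λ : Set A) = ⊤)
    (hΓfin : Module.Finite R Γ)
    (hlt : Λ < Γ)
    (hmin : ∀ Λ' : Subalgebra R A,
      (Module.Finite R Λ' ∧ Submodule.span K (Λ' : Set A) = ⊤) →
      Λ ≤ Λ' → Λ' ≤ Γ → Λ' = Λ ∨ Λ' = Γ) :
    ∃ 𝔓 : Ideal Λ, 𝔓.IsMaximal ∧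
      ({x : A | ∀ g ∈ Γ, x * g ∈ Λ} = Subtype.val '' (𝔓 : Set Λ)) ∧
      (∀ x ∈ Γ, ∀ p : Λ, p ∈ 𝔓 → x * (p : A) ∈ Subtype.val '' (𝔓 : Set Λ)) ∧
      (Ideal.comap (algebraMap R Λ) 𝔓 ≠ ⊥) ∧
      (∃ x ∈ Γ, x ∉ Λ ∧ ∃ k : ℕ,
        ∀ a ∈ (Ideal.comap (algebraMap R Λ) 𝔓) ^ k, a • x ∈ Λ) ∧
      (∀ 𝔮 : Ideal R, 𝔮.IsPrime → 𝔮 ≠ ⊥ →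
        (∃ x ∈ Γ, x ∉ Λ ∧ ∃ k : ℕ, ∀ a ∈ 𝔮 ^ k, a • x ∈ Λ) →
        𝔮 = Ideal.comap (algebraMap R Λ) 𝔓) := by
  obtain ⟨r, hr0, hr⟩ := exists_ne_zero_smul_mem_of_fg (Subalgebra.toSubmodule Λ)
    (Module.Finite.iff_fg (N := Subalgebra.toSubmodule Γ) |>.mp hΓfin)
    fun x _ => exists_ne_zero_smul_mem_of_mem_span (K := K) _ (by simp [hΛspan])
  obtain ⟨x, hxΓ, hxΛ⟩ := SetLike.exists_of_lt hlt
  have hΛΓ : Λ ≤ Γ := hlt.le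
  have hprime : (Λ.conductor Γ).IsPrime := Subalgebra.isPrime_conductor hΛΓ hlt.not_ge fun b =>
    have hle := Subalgebra.addMul_le hΛΓ b
    have hge := Subalgebra.le_addMul hΛΓ b
    hmin _ ⟨Module.Finite.of_injective (Subalgebra.inclusion hle).toLinearMap
      (Subalgebra.inclusion_injective hle), top_unique (hΛspan ▸ span_mono hge)⟩ hge hle
  set 𝔭 := (Λ.conductor Γ).comap (algebraMap R Λ)
  have h𝔭 : 𝔭 ≠ ⊥ := fun h => hr0 <| (Submodule.mem_bot R).mp <|
    h ▸ Subalgebra.algebraMap_mem_conductor hr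
  have h𝔭max : 𝔭.IsMaximal := Ideal.IsPrime.isMaximal inferInstance h𝔭
  refine ⟨Λ.conductor Γ, Ideal.isMaximal_of_isIntegral_of_isMaximal_comap _ h𝔭max,
    Subalgebra.image_val_conductor.symm,
    fun x hx p hp => Subalgebra.mul_mem_image_val_conductor hx hp, h𝔭,
    ⟨x, hxΓ, hxΛ, 1, fun a ha =>
      Subalgebra.smul_mem_of_mem_comap_conductor (by rwa [pow_one] at ha) hxΓ⟩, ?_⟩
  rintro 𝔮 h𝔮 h𝔮0 ⟨y, hyΓ, hyΛ, k, hk⟩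
  exact Ideal.eq_of_smul_mem_of_pow_smul_mem (N := Subalgebra.toSubmodule Λ) hyΛ
    (h𝔮.isMaximal h𝔮0) (fun a ha => Subalgebra.smul_mem_of_mem_comap_conductor ha hyΓ) hk
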